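/- If a nonzero pair (u, y) satisfies By = (M + CSQ⁻¹Cᵀ)u and Bᵀu = −ARW⁻¹Aᵀy, with M symmetric PSD, S, Q, R, W diagonal positive definite, and B injective, then y = 0 and u is a nonzero vector in Null(M) ∩ Null(Cᵀ) ∩ Null(Bᵀ). -/

import Mathlib

/-!
With `P = M + C S Q⁻¹ Cᵀ` and `H = A R W⁻¹ Aᵀ`, both positive semidefinite, pairing `B y = P u`
with `u` and `Bᵀ u = -H y` with `y` gives `0 ≤ uᵀ P u = uᵀ B y = (Bᵀ u)ᵀ y = -yᵀ H y ≤ 0`.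
So both quadratic forms vanish, whence `P u = 0` and `H y = 0`. Then `B y = 0` forces `y = 0`,
`Bᵀ u = 0`, and `P u = 0` splits into `M u = 0` and `Cᵀ u = 0` because `S Q⁻¹` is positive
definite.
-/

open Matrix
open scoped ComplexOrder

namespace Matrix

variable {m n 𝕜 : Type*} [Fintype m] [Fintype n] [RCLike 𝕜]

theorem PosSemidef.mulVec_eq_zero_of_add_mulVec_eq_zero {P Q : Matrix n n 𝕜}
    (hP : P.PosSemidef) (hQ : Q.PosSemidef) {x : n → 𝕜} (h : (P + Q) *ᵥ x = 0) :
    P *ᵥ x = 0 ∧ Q *ᵥ x = 0 := by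
  have hsum : star x ⬝ᵥ P *ᵥ x + star x ⬝ᵥ Q *ᵥ x = 0 := by
    rw [← dotProduct_add, ← add_mulVec, h, dotProduct_zero]
  obtain ⟨hPx, hQx⟩ := (add_eq_zero_iff_of_nonneg (hP.dotProduct_mulVec_nonneg x)
    (hQ.dotProduct_mulVec_nonneg x)).mp hsum
  exact ⟨(hP.dotProduct_mulVec_zero_iff x).mp hPx, (hQ.dotProduct_mulVec_zero_iff x).mp hQx⟩

theorem PosDef.conjTranspose_mulVec_eq_zero {D : Matrix n n 𝕜} (hD : D.PosDef)
    (C : Matrix m n 𝕜) {x : m → 𝕜} (h : (C * D * Cᴴ) *ᵥ x = 0) : Cᴴ *ᵥ x = 0 := by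
  by_contra hne
  have hquad : star (Cᴴ *ᵥ x) ⬝ᵥ D *ᵥ (Cᴴ *ᵥ x) = star x ⬝ᵥ (C * D * Cᴴ) *ᵥ x := by
    rw [star_mulVec, conjTranspose_conjTranspose, ← dotProduct_mulVec, mulVec_mulVec,
      mulVec_mulVec]
  exact (hD.dotProduct_mulVec_pos hne).ne' (by rw [hquad, h, dotProduct_zero])

theorem PosSemidef.mulVec_eq_zero_of_skew_coupling {P : Matrix m m 𝕜} {H : Matrix n n 𝕜}
    (hP : P.PosSemidef) (hH : H.PosSemidef) {B : Matrix m n 𝕜} {u : m → 𝕜} {y : n → 𝕜}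
    (h₁ : B *ᵥ y = P *ᵥ u) (h₂ : Bᴴ *ᵥ u = -(H *ᵥ y)) : P *ᵥ u = 0 ∧ H *ᵥ y = 0 := by
  have hchain : star u ⬝ᵥ P *ᵥ u = -(star y ⬝ᵥ H *ᵥ y) := by
    rw [← h₁, dotProduct_mulVec, ← conjTranspose_conjTranspose B, ← star_mulVec, h₂, star_neg,
      neg_dotProduct, star_mulVec, hH.isHermitian.eq, ← dotProduct_mulVec]
  have hHy : star y ⬝ᵥ H *ᵥ y = 0 :=
    le_antisymm (neg_nonneg.mp (hchain ▸ hP.dotProduct_mulVec_nonneg u))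
      (hH.dotProduct_mulVec_nonneg y)
  refine ⟨(hP.dotProduct_mulVec_zero_iff u).mp ?_, (hH.dotProduct_mulVec_zero_iff y).mp hHy⟩
  rw [hchain, hHy, neg_zero]

variable {K : Type*} [DecidableEq n] [Field K]

theorem inv_diagonal_of_ne_zero {q : n → K} (hq : ∀ i, q i ≠ 0) :
    (diagonal q)⁻¹ = diagonal q⁻¹ :=
  inv_eq_right_inv <| by
    rw [diagonal_mul_diagonal, ← diagonal_one]
    exact congrArg diagonal (funext fun i => mul_inv_cancel₀ (hq i))

theorem posDef_diagonal_mul_inv_diagonal [LinearOrder K] [StarRing K] [StarOrderedRing K]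
    {s q : n → K} (hs : ∀ i, 0 < s i) (hq : ∀ i, 0 < q i) :
    (diagonal s * (diagonal q)⁻¹).PosDef := by
  rw [inv_diagonal_of_ne_zero fun i => (hq i).ne', diagonal_mul_diagonal, posDef_diagonal_iff]
  exact fun i => mul_pos (hs i) (inv_pos.mpr (hq i))

end Matrix

theorem reduced_kkt_nonzero_kernel {k n l p : ℕ}
    (M : Matrix (Fin k) (Fin k) ℝ) (hM : M.PosSemidef)
    (B : Matrix (Fin k) (Fin n) ℝ) (hB : Function.Injective B.mulVec)
    (C : Matrix (Fin k) (Fin l) ℝ) (A : Matrix (Fin n) (Fin p) ℝ)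
    (s q : Fin l → ℝ) (r w : Fin p → ℝ)
    (hs : ∀ i, 0 < s i) (hq : ∀ i, 0 < q i) (hr : ∀ i, 0 < r i) (hw : ∀ i, 0 < w i)
    (u : Fin k → ℝ) (y : Fin n → ℝ) (hne : ¬(u = 0 ∧ y = 0))
    (h₁ : B.mulVec y = (M + C * Matrix.diagonal s * (Matrix.diagonal q)⁻¹ * Cᵀ).mulVec u)
    (h₂ : Bᵀ.mulVec u = -(A * Matrix.diagonal r * (Matrix.diagonal w)⁻¹ * Aᵀ).mulVec y) :
    y = 0 ∧ u ≠ 0 ∧ M.mulVec u = 0 ∧ Cᵀ.mulVec u = 0 ∧ Bᵀ.mulVec u = 0 := by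
  rw [Matrix.mul_assoc C] at h₁
  rw [Matrix.mul_assoc A] at h₂
  simp only [← conjTranspose_eq_transpose_of_trivial] at h₁ h₂ ⊢
  have hD := posDef_diagonal_mul_inv_diagonal hs hq
  have hCDC := hD.posSemidef.mul_mul_conjTranspose_same C
  have hAEA := (posDef_diagonal_mul_inv_diagonal hr hw).posSemidef.mul_mul_conjTranspose_same A
  obtain ⟨hPu, hHy⟩ := (hM.add hCDC).mulVec_eq_zero_of_skew_coupling hAEA h₁ h₂
  obtain ⟨hMu, hCDCu⟩ := hM.mulVec_eq_zero_of_add_mulVec_eq_zero hCDC hPu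
  have hy : y = 0 := hB (by rw [h₁, hPu, mulVec_zero])
  refine ⟨hy, fun hu => hne ⟨hu, hy⟩, hMu, hD.conjTranspose_mulVec_eq_zero C hCDCu, ?_⟩
  rw [h₂, hHy, neg_zero]
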